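/- Let n, m ≥ 1 be integers and let S be a digitally convex set of K_n □ K_m that is nonempty and not equal to the whole vertex set. Then there exist a nonempty proper subset S₁ of the vertices of K_n and a nonempty proper subset S₂ of the vertices of K_m such that S = S₁ × S₂. -/
import Mathlib


open SimpleGraph

/-- `N[S]`: the union of closed neighbourhoods of the vertices of `S`. -/
def closedNbhd {V : Type*} (G : SimpleGraph V) (S : Set V) : Set V :=
  ⋃ v ∈ S, insert v (G.neighborSet v)

/-- A set `S` is digitally convex in `G` if every vertex `v` with `N[v] ⊆ N[S]`
belongs to `S`. -/
def DigConvex {V : Type*} (G : SimpleGraph V) (S : Set V) : Prop :=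
  ∀ v : V, insert v (G.neighborSet v) ⊆ closedNbhd G S → v ∈ S

/-- `n_D(G)`: the number of digitally convex sets of `G`. -/
noncomputable def nD {V : Type*} (G : SimpleGraph V) : ℕ :=
  Nat.card {S : Set V // DigConvex G S}

/-- Every digitally convex set of `K_n □ K_m` other than `∅` and the full vertex
set is a product `S₁ × S₂` of a nonempty proper subset of `V(K_n)` and a nonempty
proper subset of `V(K_m)`. -/
theorem digConvex_complete_boxProd_eq_prod (n m : ℕ) (hn : 1 ≤ n) (hm : 1 ≤ m)
    (S : Set (Fin n × Fin m))
    (hS : DigConvex ((⊤ : SimpleGraph (Fin n)) □ (⊤ : SimpleGraph (Fin m))) S)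
    (hne : S.Nonempty) (hproper : S ≠ Set.univ) :
    ∃ (S₁ : Set (Fin n)) (S₂ : Set (Fin m)),
      S₁.Nonempty ∧ S₁ ≠ Set.univ ∧ S₂.Nonempty ∧ S₂ ≠ Set.univ ∧ S = S₁ ×ˢ S₂ := by
  classical
  set G := ((⊤ : SimpleGraph (Fin n)) □ (⊤ : SimpleGraph (Fin m))) with hG
  have hmem : ∀ (s y : Fin n × Fin m),
      y ∈ insert s (G.neighborSet s) ↔ (y.1 = s.1 ∨ y.2 = s.2) := by
    intro s y
    simp only [Set.mem_insert_iff, mem_neighborSet, hG, boxProd_adj, top_adj]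
    constructor
    · rintro (rfl | ⟨⟨h1, h2⟩ | ⟨h1, h2⟩⟩) <;> simp_all
    · intro h
      by_cases h1 : y.1 = s.1 <;> by_cases h2 : y.2 = s.2
      · left; exact Prod.ext h1 h2
      · right; right; exact ⟨fun hh => h2 hh.symm, h1.symm⟩
      · right; left; exact ⟨fun hh => h1 hh.symm, h2.symm⟩
      · tauto
  have hcN : ∀ y : Fin n × Fin m,
      y ∈ closedNbhd G S ↔ ∃ s ∈ S, y.1 = s.1 ∨ y.2 = s.2 := by
    intro y
    simp only [closedNbhd, Set.mem_iUnion, exists_prop]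
    constructor
    · rintro ⟨s, hs, hy⟩; exact ⟨s, hs, (hmem s y).1 hy⟩
    · rintro ⟨s, hs, hy⟩; exact ⟨s, hs, (hmem s y).2 hy⟩
  set A : Set (Fin n) := Prod.fst '' S with hA
  set B : Set (Fin m) := Prod.snd '' S with hB
  have hAne : A.Nonempty := hne.image _
  have hBne : B.Nonempty := hne.image _
  have hSeq : S = A ×ˢ B := by
    ext ⟨a, b⟩
    constructor
    · intro h; exact ⟨⟨(a,b), h, rfl⟩, ⟨(a,b), h, rfl⟩⟩
    · rintro ⟨⟨s, hs, hs1⟩, ⟨t, ht, ht2⟩⟩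
      apply hS
      intro y hy
      rcases (hmem _ y).1 hy with h1 | h2
      · exact (hcN y).2 ⟨s, hs, Or.inl (h1.trans hs1.symm)⟩
      · exact (hcN y).2 ⟨t, ht, Or.inr (h2.trans ht2.symm)⟩
  have hAproper : A ≠ Set.univ := by
    intro hAu
    apply hproper
    apply Set.eq_univ_of_forall
    intro v
    apply hS
    intro y _
    have : y.1 ∈ A := hAu ▸ Set.mem_univ _
    rcases this with ⟨s, hs, hs1⟩
    exact (hcN y).2 ⟨s, hs, Or.inl hs1.symm⟩
  have hBproper : B ≠ Set.univ := by
    intro hBu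
    apply hproper
    apply Set.eq_univ_of_forall
    intro v
    apply hS
    intro y _
    have : y.2 ∈ B := hBu ▸ Set.mem_univ _
    rcases this with ⟨s, hs, hs2⟩
    exact (hcN y).2 ⟨s, hs, Or.inr hs2.symm⟩
  exact ⟨A, B, hAne, hAproper, hBne, hBproper, hSeq⟩
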